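/- The topology Z^T on Minkowski space equals the intersection topology of T^tc and the Euclidean topology T_E, i.e. Z^T is the topology generated by the family {V ∩ U : V is T^tc-open, U is T_E-open}. -/
import Mathlib


noncomputable section

open TopologicalSpace Filter

/-- Minkowski space `M = ℝ × ℝ³`. -/
abbrev Mink : Type := ℝ × EuclideanSpace ℝ (Fin 3)

/-- The Euclidean (product) topology on `M`. -/
def TE : TopologicalSpace Mink := inferInstance

/-- Time difference Δt(x,y). -/
def dtime (x y : Mink) : ℝ := y.1 - x.1

/-- Spatial distance Δr(x,y). -/
def dspace (x y : Mink) : ℝ := ‖y.2 - x.2‖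

/-- Chronological order `x ≪ y`. -/
def Chron (x y : Mink) : Prop := dspace x y < dtime x y

/-- Causal order `x ≺ y`. -/
def Causal (x y : Mink) : Prop := dspace x y ≤ dtime x y

/-- Euclidean open ball of radius ε about x. -/
def eball (x : Mink) (ε : ℝ) : Set Mink :=
  {y | Real.sqrt ((y.1 - x.1) ^ 2 + ‖y.2 - x.2‖ ^ 2) < ε}

/-- Time cone `C^T(x)`. -/
def timeCone (x : Mink) : Set Mink := {x} ∪ {y | Chron x y ∨ Chron y x}

/-- Space cone `C^S(x)`. -/
def spaceCone (x : Mink) : Set Mink := {x} ∪ {y | |dtime x y| < dspace x y}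

/-- Light cone `C^L(x)`. -/
def lightCone (x : Mink) : Set Mink := {y | y ≠ x ∧ |dtime x y| = dspace x y}

/-- Causal cone `C^J(x)`. -/
def causalCone (x : Mink) : Set Mink := {x} ∪ {y | Causal x y ∨ Causal y x}

/-- Closed space cone `K^S(x)` (space cone together with the light cone). -/
def closedSpaceCone (x : Mink) : Set Mink := {x} ∪ {y | |dtime x y| ≤ dspace x y}

/-- Bounded time cones, the defining family of `Z^T`. -/
def BasisT : Set (Set Mink) := {S | ∃ x ε, 0 < ε ∧ S = timeCone x ∩ eball x ε}

/-- Bounded space cones, the defining family of `Z^S`. -/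
def BasisS : Set (Set Mink) := {S | ∃ x ε, 0 < ε ∧ S = spaceCone x ∩ eball x ε}

/-- Balls with the light cone of the centre removed, the defining family of `Z`. -/
def BasisZ : Set (Set Mink) := {S | ∃ x ε, 0 < ε ∧ S = eball x ε \ lightCone x}

/-- Zeeman's topology `Z^T` (the Minkowski analogue of the path topology). -/
def ZT : TopologicalSpace Mink := TopologicalSpace.generateFrom BasisT

/-- The topology `Z^S`. -/
def ZS : TopologicalSpace Mink := TopologicalSpace.generateFrom BasisS

/-- The topology `Z`. -/
def Ztop : TopologicalSpace Mink := TopologicalSpace.generateFrom BasisZ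

def Jplus (x : Mink) : Set Mink := {y | Causal x y}
def Jminus (x : Mink) : Set Mink := {y | Causal y x}
def Nplus (x : Mink) : Set Mink := {y | y ≠ x ∧ dtime x y = dspace x y}
def Nminus (x : Mink) : Set Mink := {y | y ≠ x ∧ -dtime x y = dspace x y}

/-- The interval topology `T^tc` whose subbasic open sets are time cones. -/
def Ttc : TopologicalSpace Mink :=
  TopologicalSpace.generateFrom {S | ∃ x, S = timeCone x}

/-- The interval topology `T^≪` of the irreflexive causal order. -/
def Tll : TopologicalSpace Mink :=
  TopologicalSpace.generateFrom
    ({S | ∃ x, S = Set.univ \ (Jplus x \ {x})} ∪ {S | ∃ x, S = Set.univ \ (Jminus x \ {x})})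

/-- The interval topology `T^→` of irreflexive horismos. -/
def Thor : TopologicalSpace Mink :=
  TopologicalSpace.generateFrom
    ({S | ∃ x, S = Set.univ \ Nplus x} ∪ {S | ∃ x, S = Set.univ \ Nminus x})

/-- The topology `(Z^T)′` generated by bounded causal cones. -/
def ZT' : TopologicalSpace Mink :=
  TopologicalSpace.generateFrom {S | ∃ x ε, 0 < ε ∧ S = causalCone x ∩ eball x ε}

/-- The topology `(Z^S)′` generated by bounded closed space cones. -/
def ZS' : TopologicalSpace Mink :=
  TopologicalSpace.generateFrom {S | ∃ x ε, 0 < ε ∧ S = closedSpaceCone x ∩ eball x ε}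

/-- The topology `(T^tc)′` generated by causal cones. -/
def Ttc' : TopologicalSpace Mink :=
  TopologicalSpace.generateFrom {S | ∃ x, S = causalCone x}

/-- The topology `(T^≪)′` generated by closed space cones. -/
def Tll' : TopologicalSpace Mink :=
  TopologicalSpace.generateFrom {S | ∃ x, S = closedSpaceCone x}

/-- An endless causal curve. -/
def EndlessCausalCurve (γ : ℝ → Mink) : Prop :=
  Continuous γ ∧ (∀ s t : ℝ, s < t → Causal (γ s) (γ t) ∧ γ s ≠ γ t) ∧
    (∀ c : ℝ, ∃ t, c < (γ t).1) ∧ (∀ c : ℝ, ∃ t, (γ t).1 < c)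

/-- `γ` is a `T`-limit curve of the sequence `γs` of curves. -/
def IsLimitCurve (T : TopologicalSpace Mink) (γ : ℝ → Mink) (γs : ℕ → ℝ → Mink) : Prop :=
  ∃ nk : ℕ → ℕ, StrictMono nk ∧
    ∀ p ∈ Set.range γ, ∃ pk : ℕ → Mink,
      (∀ k, pk k ∈ Set.range (γs (nk k))) ∧ Filter.Tendsto pk Filter.atTop (@nhds Mink T p)

section Aux

lemma mem_eball_self (x : Mink) {ε : ℝ} (hε : 0 < ε) : x ∈ eball x ε := by
  simp [eball, hε]

lemma eball_subset_ball (x : Mink) (ε : ℝ) : eball x ε ⊆ Metric.ball x ε := by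
  intro y hy
  have hy' : Real.sqrt ((y.1 - x.1) ^ 2 + ‖y.2 - x.2‖ ^ 2) < ε := hy
  rw [Metric.mem_ball, Prod.dist_eq]
  apply max_lt
  · have h1 : |y.1 - x.1| ≤ Real.sqrt ((y.1 - x.1) ^ 2 + ‖y.2 - x.2‖ ^ 2) := by
      rw [← Real.sqrt_sq_eq_abs]
      exact Real.sqrt_le_sqrt (le_add_of_nonneg_right (sq_nonneg _))
    calc dist y.1 x.1 = |y.1 - x.1| := Real.dist_eq _ _
      _ < ε := lt_of_le_of_lt h1 hy'
  · have h2 : ‖y.2 - x.2‖ ≤ Real.sqrt ((y.1 - x.1) ^ 2 + ‖y.2 - x.2‖ ^ 2) := by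
      calc ‖y.2 - x.2‖ = Real.sqrt (‖y.2 - x.2‖ ^ 2) := (Real.sqrt_sq (norm_nonneg _)).symm
        _ ≤ _ := Real.sqrt_le_sqrt (le_add_of_nonneg_left (sq_nonneg _))
    calc dist y.2 x.2 = ‖y.2 - x.2‖ := dist_eq_norm _ _
      _ < ε := lt_of_le_of_lt h2 hy'

lemma eball_mono (x : Mink) {ε ε' : ℝ} (h : ε ≤ ε') : eball x ε ⊆ eball x ε' :=
  fun _ hy => lt_of_lt_of_le hy h

lemma isOpen_eball (x : Mink) {ε : ℝ} (hε : 0 < ε) : IsOpen (eball x ε) := by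
  have h : eball x ε = {y : Mink | (y.1 - x.1) ^ 2 + ‖y.2 - x.2‖ ^ 2 < ε ^ 2} := by
    ext y; simp [eball, Real.sqrt_lt' hε]
  rw [h]
  exact isOpen_lt (by fun_prop) continuous_const

lemma isOpen_chron_future (z : Mink) : IsOpen {y : Mink | Chron z y} := by
  have : {y : Mink | Chron z y} = {y : Mink | ‖y.2 - z.2‖ < y.1 - z.1} := rfl
  rw [this]
  exact isOpen_lt (by fun_prop) (by fun_prop)

lemma isOpen_chron_past (z : Mink) : IsOpen {y : Mink | Chron y z} := by
  have : {y : Mink | Chron y z} = {y : Mink | ‖z.2 - y.2‖ < z.1 - y.1} := rfl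
  rw [this]
  exact isOpen_lt (by fun_prop) (by fun_prop)

/-- If `x` is in the time cone of `z`, small bounded time cones at `x` stay inside it. -/
lemma timeCone_nhds {z x : Mink} (hx : x ∈ timeCone z) :
    ∃ ε > 0, timeCone x ∩ eball x ε ⊆ timeCone z := by
  rcases hx with hx | hx
  · refine ⟨1, one_pos, ?_⟩
    rcases hx with rfl
    exact fun y hy => hy.1
  · rcases hx with hzx | hxz
    · obtain ⟨δ, hδ, hball⟩ := Metric.isOpen_iff.mp (isOpen_chron_future z) x hzx
      exact ⟨δ, hδ, fun y hy => Or.inr (Or.inl (hball (eball_subset_ball x δ hy.2)))⟩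
    · obtain ⟨δ, hδ, hball⟩ := Metric.isOpen_iff.mp (isOpen_chron_past z) x hxz
      exact ⟨δ, hδ, fun y hy => Or.inr (Or.inr (hball (eball_subset_ball x δ hy.2)))⟩

lemma ttc_nhds {V : Set Mink} (hV : Ttc.IsOpen V) :
    ∀ x ∈ V, ∃ ε > 0, timeCone x ∩ eball x ε ⊆ V := by
  have hV' : TopologicalSpace.GenerateOpen {S | ∃ x, S = timeCone x} V := hV
  induction hV' with
  | basic s hs =>
    obtain ⟨z, rfl⟩ := hs
    exact fun x hx => timeCone_nhds hx
  | univ => exact fun x _ => ⟨1, one_pos, fun _ _ => trivial⟩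
  | inter s t hs ht ihs iht =>
    intro x hx
    obtain ⟨ε₁, hε₁, h1⟩ := ihs hs x hx.1
    obtain ⟨ε₂, hε₂, h2⟩ := iht ht x hx.2
    refine ⟨min ε₁ ε₂, lt_min hε₁ hε₂, fun y hy => ?_⟩
    exact ⟨h1 ⟨hy.1, eball_mono x (min_le_left _ _) hy.2⟩,
      h2 ⟨hy.1, eball_mono x (min_le_right _ _) hy.2⟩⟩
  | sUnion S hS ih =>
    rintro x ⟨t, ht, hxt⟩
    obtain ⟨ε, hε, h⟩ := ih t ht (hS t ht) x hxt
    exact ⟨ε, hε, fun y hy => ⟨t, ht, h hy⟩⟩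

lemma zt_open_of {W : Set Mink}
    (h : ∀ x ∈ W, ∃ ε > 0, timeCone x ∩ eball x ε ⊆ W) : ZT.IsOpen W := by
  choose! ε hε hsub using h
  have hW : W = ⋃ x ∈ W, timeCone x ∩ eball x (ε x) := by
    ext y
    constructor
    · intro hy
      exact Set.mem_biUnion hy ⟨Or.inl rfl, mem_eball_self y (hε y hy)⟩
    · rintro ⟨s, ⟨x, rfl⟩, hs⟩
      simp only [Set.mem_iUnion] at hs
      obtain ⟨hx, hy⟩ := hs
      exact hsub x hx hy
  rw [hW]
  letI := ZT
  exact isOpen_biUnion fun x hx =>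
    TopologicalSpace.isOpen_generateFrom_of_mem ⟨x, ε x, hε x hx, rfl⟩

end Aux

/-- `Z^T` equals the intersection topology of `T^tc` and the Euclidean topology. -/
theorem ZT_eq_intersection_topology :
    ZT = TopologicalSpace.generateFrom
      {S : Set Mink | ∃ V U : Set Mink, Ttc.IsOpen V ∧ TE.IsOpen U ∧ S = V ∩ U} := by
  apply le_antisymm
  · apply le_generateFrom
    rintro S ⟨V, U, hV, hU, rfl⟩
    apply zt_open_of
    rintro x ⟨hxV, hxU⟩
    obtain ⟨ε₁, hε₁, h1⟩ := ttc_nhds hV x hxV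
    have hU' : IsOpen U := hU
    obtain ⟨δ, hδ, hball⟩ := Metric.isOpen_iff.mp hU' x hxU
    refine ⟨min ε₁ δ, lt_min hε₁ hδ, fun y hy => ?_⟩
    have hy1 : y ∈ eball x ε₁ := eball_mono x (min_le_left _ _) hy.2
    have hy2 : y ∈ eball x δ := eball_mono x (min_le_right _ _) hy.2
    exact ⟨h1 ⟨hy.1, hy1⟩, hball (eball_subset_ball x δ hy2)⟩
  · apply le_generateFrom
    rintro S ⟨x, ε, hε, rfl⟩
    exact TopologicalSpace.isOpen_generateFrom_of_mem
      ⟨timeCone x, eball x ε,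
        TopologicalSpace.isOpen_generateFrom_of_mem ⟨x, rfl⟩,
        isOpen_eball x hε, rfl⟩
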